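/- arXiv:2305.15361 — 2 statements merged into one kernel-verified Lean document; each statement's English description precedes it below -/
import Mathlib

section
/- Let α be irrational with 1 < α < 2 and let β satisfy 1/α + 1/β = 1. Set a_n = ⌊nα⌋ and b_n = ⌊nβ⌋ for n ≥ 1, b_0 = 0, B = {⌊mβ⌋ : m ≥ 1}, and define r_n as the number of integers m ∈ B with a_n < m ≤ b_{n−1}. Then for every n ≥ 1, the difference r_{n+1} − r_n is 0 or 1, and r_{n+1} − r_n = 1 if and only if a_{n+1} − a_n = 1. -/
/-!
For `N = ⌊nα⌋`, exactly `N - n` terms of `B = {⌊kβ⌋ : k ≥ 1}` are at most `N`: multiplying by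
`α - 1` and using `(α - 1)β = α` turns `⌊kβ⌋ ≤ N` into a condition on `(N + 1 - k)α`, which
`nα < N + 1 ≤ (n + 1)α` decides. Hence `r_n = (n - 1) - (a_n - n) = 2n - 1 - a_n`, so
`r_{n+1} - r_n = 2 - (a_{n+1} - a_n)`, and `a_{n+1} - a_n ∈ {1, 2}` because `⌊α⌋ = 1`.
-/

theorem Int.mul_le_floor_mul_add_one_iff {α : ℝ} (hα : 1 < α) (n j : ℤ) :
    j * α ≤ ⌊n * α⌋ + 1 ↔ j ≤ n := by
  have hN : (⌊n * α⌋ : ℝ) ≤ n * α := Int.floor_le _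
  constructor
  · intro hj
    by_contra! hnj
    have : ((n + 1 : ℤ) : ℝ) * α ≤ j * α := by gcongr; exact_mod_cast hnj
    push_cast at this
    linarith
  · intro hj
    have : (j : ℝ) * α ≤ n * α := by gcongr
    linarith [Int.lt_floor_add_one (n * α)]

theorem Int.floor_add_sub_floor_eq_or (x y : ℝ) :
    ⌊x + y⌋ - ⌊x⌋ = ⌊y⌋ ∨ ⌊x + y⌋ - ⌊x⌋ = ⌊y⌋ + 1 := by
  have := Int.le_floor_add x y
  have := Int.le_floor_add_floor x y
  omega

theorem strictMono_floor_natCast_mul {β : ℝ} (hβ : 1 ≤ β) :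
    StrictMono fun k : ℕ => ⌊(k : ℝ) * β⌋ := by
  refine strictMono_nat_of_lt_succ fun k => ?_
  have hfloor : 1 ≤ ⌊β⌋ := Int.le_floor.mpr (by simpa using hβ)
  have := Int.le_floor_add ((k : ℝ) * β) β
  push_cast
  rw [add_mul, one_mul]
  omega

theorem ncard_setOf_floor_natCast_mul_mem_Ioc {β : ℝ} (hβ : 1 ≤ β) (t j : ℕ) :
    {m : ℤ | (∃ k : ℕ, 0 < k ∧ m = ⌊(k : ℝ) * β⌋) ∧
      ⌊(t : ℝ) * β⌋ < m ∧ m ≤ ⌊(j : ℝ) * β⌋}.ncard = j - t := by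
  have hmono := strictMono_floor_natCast_mul hβ
  have hset : {m : ℤ | (∃ k : ℕ, 0 < k ∧ m = ⌊(k : ℝ) * β⌋) ∧
      ⌊(t : ℝ) * β⌋ < m ∧ m ≤ ⌊(j : ℝ) * β⌋} =
      (fun k : ℕ => ⌊(k : ℝ) * β⌋) '' Finset.Ioc t j := by
    ext m
    simp only [Set.mem_ofPred_eq, Set.mem_image, Finset.coe_Ioc, Set.mem_Ioc]
    constructor
    · rintro ⟨⟨k, -, rfl⟩, htk, hkj⟩
      exact ⟨k, ⟨hmono.lt_iff_lt.mp htk, hmono.le_iff_le.mp hkj⟩, rfl⟩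
    · rintro ⟨k, ⟨htk, hkj⟩, rfl⟩
      exact ⟨⟨k, by omega, rfl⟩, hmono.lt_iff_lt.mpr htk, hmono.le_iff_le.mpr hkj⟩
  rw [hset, Set.ncard_image_of_injective _ hmono.injective, Set.ncard_coe_finset, Nat.card_Ioc]

namespace Real.HolderConjugate

variable {α β : ℝ}

theorem floor_mul_lt_floor_mul_iff (h : α.HolderConjugate β) (n k : ℤ) :
    ⌊n * α⌋ < ⌊k * β⌋ ↔ ⌊n * α⌋ - n < k := by
  set N := ⌊n * α⌋
  have hkβ : k * β * (α - 1) = k * α := by linear_combination k * h.sub_one_mul_conj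
  calc N < ⌊k * β⌋ ↔ (N + 1) * (α - 1) ≤ k * β * (α - 1) := by
        rw [Int.lt_floor_iff, mul_le_mul_iff_of_pos_right h.sub_one_pos]
    _ ↔ ((N + 1 - k : ℤ) : ℝ) * α ≤ N + 1 := by
        rw [hkβ]; push_cast; constructor <;> intro <;> linarith
    _ ↔ N - n < k := by rw [Int.mul_le_floor_mul_add_one_iff h.lt]; omega

theorem ncard_setOf_floor_mul_mem_Ioc_eq (h : α.HolderConjugate β) (hα2 : α < 2) {n : ℕ}
    (hn : 0 < n) :
    ({m : ℤ | (∃ k : ℕ, 0 < k ∧ m = ⌊(k : ℝ) * β⌋) ∧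
      ⌊(n : ℝ) * α⌋ < m ∧ m ≤ ⌊((n - 1 : ℕ) : ℝ) * β⌋}.ncard : ℤ) =
      2 * n - 1 - ⌊n * α⌋ := by
  have hmono := strictMono_floor_natCast_mul h.symm.lt.le
  have hlow : (n : ℤ) ≤ ⌊n * α⌋ := Int.le_floor.mpr (by push_cast; nlinarith [h.lt])
  have hupp : ⌊n * α⌋ < 2 * n :=
    Int.floor_lt.mpr (by push_cast; nlinarith [(Nat.cast_pos (α := ℝ)).mpr hn])
  set t := (⌊n * α⌋ - n).toNat
  have ht : (t : ℤ) = ⌊n * α⌋ - n := Int.toNat_of_nonneg (by omega)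
  have hcut (k : ℕ) : ⌊(n : ℝ) * α⌋ < ⌊(k : ℝ) * β⌋ ↔ ⌊(t : ℝ) * β⌋ < ⌊(k : ℝ) * β⌋ := by
    have := h.floor_mul_lt_floor_mul_iff n k
    push_cast at this
    rw [this, hmono.lt_iff_lt]
    omega
  have hset : {m : ℤ | (∃ k : ℕ, 0 < k ∧ m = ⌊(k : ℝ) * β⌋) ∧
      ⌊(n : ℝ) * α⌋ < m ∧ m ≤ ⌊((n - 1 : ℕ) : ℝ) * β⌋} =
      {m : ℤ | (∃ k : ℕ, 0 < k ∧ m = ⌊(k : ℝ) * β⌋) ∧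
      ⌊(t : ℝ) * β⌋ < m ∧ m ≤ ⌊((n - 1 : ℕ) : ℝ) * β⌋} := by
    ext m
    refine and_congr_right fun ⟨k, _, hmk⟩ => ?_
    rw [hmk, hcut k]
  rw [hset, ncard_setOf_floor_natCast_mul_mem_Ioc h.symm.lt.le]
  omega

end Real.HolderConjugate

theorem r_difference_sturmian_general
    (α β : ℝ)
    (hα1 : 1 < α) (hα2 : α < 2) (hsum : 1 / α + 1 / β = 1)
    (a b : ℕ → ℤ)
    (ha : ∀ n : ℕ, a n = ⌊(n : ℝ) * α⌋)
    (hb : ∀ n : ℕ, b n = ⌊(n : ℝ) * β⌋)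
    (r : ℕ → ℕ)
    (hr : ∀ n : ℕ, r n =
      {m : ℤ | (∃ k : ℕ, 0 < k ∧ m = ⌊(k : ℝ) * β⌋) ∧
        a n < m ∧ m ≤ b (n - 1)}.ncard) :
    ∀ n : ℕ, 0 < n →
      ((r (n + 1) : ℤ) - (r n : ℤ) = 0 ∨ (r (n + 1) : ℤ) - (r n : ℤ) = 1) ∧
      ((r (n + 1) : ℤ) - (r n : ℤ) = 1 ↔ a (n + 1) - a n = 1) := by
  intro n hn
  have hαβ : α.HolderConjugate β :=
    Real.holderConjugate_iff.mpr ⟨hα1, by simpa only [one_div] using hsum⟩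
  have hr_eq : ∀ n : ℕ, 0 < n → (r n : ℤ) = 2 * n - 1 - a n := fun n hn => by
    rw [hr, ha, hb]; exact hαβ.ncard_setOf_floor_mul_mem_Ioc_eq hα2 hn
  have hstep : a (n + 1) - a n = 1 ∨ a (n + 1) - a n = 2 := by
    have hfloor : ⌊α⌋ = 1 := Int.floor_eq_iff.mpr ⟨by norm_num [hα1.le], by norm_num [hα2]⟩
    rw [ha, ha]
    push_cast
    rw [add_mul, one_mul]
    have := Int.floor_add_sub_floor_eq_or (n * α) α
    omega
  have hr_n := hr_eq n hn
  have hr_succ := hr_eq (n + 1) n.succ_pos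
  push_cast at hr_succ
  omega

theorem r_difference_sturmian
    (α β : ℝ) (hαirr : Irrational α)
    (hα1 : 1 < α) (hα2 : α < 2) (hsum : 1 / α + 1 / β = 1)
    (a b : ℕ → ℤ)
    (ha : ∀ n : ℕ, a n = ⌊(n : ℝ) * α⌋)
    (hb : ∀ n : ℕ, b n = ⌊(n : ℝ) * β⌋)
    (r : ℕ → ℕ)
    (hr : ∀ n : ℕ, r n =
      {m : ℤ | (∃ k : ℕ, 0 < k ∧ m = ⌊(k : ℝ) * β⌋) ∧
        a n < m ∧ m ≤ b (n - 1)}.ncard) :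
    ∀ n : ℕ, 0 < n →
      ((r (n + 1) : ℤ) - (r n : ℤ) = 0 ∨ (r (n + 1) : ℤ) - (r n : ℤ) = 1) ∧
      ((r (n + 1) : ℤ) - (r n : ℤ) = 1 ↔ a (n + 1) - a n = 1) :=
  r_difference_sturmian_general α β hα1 hα2 hsum a b ha hb r hr
end

section
/- Let k be a positive integer and set α = (k − 1 + √(k² + 1))/k and c = (2 − α)/(α − 1). Then for every positive integer m, the number of positive integers n with ⌊cn⌋ = m equals k if m ∈ {⌊nα⌋ : n ≥ 1}, and equals k − 1 otherwise. -/
/-!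
`⌊n γ⌋ = m` means `m / γ ≤ n < (m + 1) / γ`, so for `m > 0` the multiplicity of `m` in the
Beatty sequence of `γ` is `⌈(m + 1) / γ⌉₊ - ⌈m / γ⌉₊`. The number `α` is a root of
`k α² = 2 (k - 1) α + 2`, which says exactly that `1 / c = (k - 1) + 1 / α`. Since `(k - 1) m` is
an integer, it comes out of the ceilings, so the multiplicity of `m` for `c` is `k - 1` plus its
multiplicity for `α`; as `α > 1`, the latter is `1` or `0` according as `m` is a value of
`⌊n α⌋` or not.
-/

noncomputable def beattyMultiplicity (γ : ℝ) (m : ℤ) : ℕ :=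
  {n : ℕ | 0 < n ∧ ⌊(n : ℝ) * γ⌋ = m}.ncard

section Beatty

variable {γ : ℝ} {m : ℕ}

theorem setOf_floor_mul_eq_eq_Ico (hγ : 0 < γ) (hm : 0 < m) :
    {n : ℕ | 0 < n ∧ ⌊(n : ℝ) * γ⌋ = m} = ↑(Finset.Ico ⌈m / γ⌉₊ ⌈(m + 1) / γ⌉₊) := by
  ext n
  have hmγ : 0 < (m : ℝ) / γ := by positivity
  simp only [Set.mem_ofPred_eq, Finset.coe_Ico, Set.mem_Ico, Nat.ceil_le, Nat.lt_ceil,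
    Int.floor_eq_iff, div_le_iff₀ hγ, lt_div_iff₀ hγ, Int.cast_natCast]
  refine ⟨fun h => h.2, fun h => ⟨?_, h⟩⟩
  exact_mod_cast hmγ.trans_le ((div_le_iff₀ hγ).2 h.1)

theorem beattyMultiplicity_eq_ceil_sub_ceil (hγ : 0 < γ) (hm : 0 < m) :
    beattyMultiplicity γ m = ⌈(m + 1) / γ⌉₊ - ⌈m / γ⌉₊ := by
  rw [beattyMultiplicity, setOf_floor_mul_eq_eq_Ico hγ hm, Set.ncard_coe_finset, Nat.card_Ico]

theorem beattyMultiplicity_pos_iff (hγ : 0 < γ) (hm : 0 < m) :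
    0 < beattyMultiplicity γ m ↔ ∃ n : ℕ, 0 < n ∧ (m : ℤ) = ⌊(n : ℝ) * γ⌋ := by
  have hfin : {n : ℕ | 0 < n ∧ ⌊(n : ℝ) * γ⌋ = m}.Finite := by
    rw [setOf_floor_mul_eq_eq_Ico hγ hm]
    exact Finset.finite_toSet _
  rw [beattyMultiplicity, Set.ncard_pos hfin]
  exact ⟨fun ⟨n, hn, h⟩ => ⟨n, hn, h.symm⟩, fun ⟨n, hn, h⟩ => ⟨n, hn, h.symm⟩⟩

theorem beattyMultiplicity_le_one (hγ : 1 ≤ γ) (hm : 0 < m) : beattyMultiplicity γ m ≤ 1 := by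
  have hγ0 : 0 < γ := one_pos.trans_le hγ
  have hstep : ((m : ℝ) + 1) / γ ≤ m / γ + 1 := by
    rw [add_div]
    gcongr
    exact div_le_one_of_le₀ hγ hγ0.le
  have hceil : ⌈((m : ℝ) + 1) / γ⌉₊ ≤ ⌈(m : ℝ) / γ⌉₊ + 1 :=
    (Nat.ceil_mono hstep).trans_eq (Nat.ceil_add_one (by positivity))
  rw [beattyMultiplicity_eq_ceil_sub_ceil hγ0 hm]
  omega

theorem beattyMultiplicity_of_inv_eq_natCast_add_inv {δ : ℝ} {j : ℕ} (hδ : 0 < δ)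
    (h : γ⁻¹ = j + δ⁻¹) (hm : 0 < m) :
    beattyMultiplicity γ m = beattyMultiplicity δ m + j := by
  have hγ : 0 < γ := inv_pos.1 (h ▸ by positivity)
  have hshift (p : ℕ) : ⌈(p : ℝ) / γ⌉₊ = ⌈(p : ℝ) / δ⌉₊ + p * j := by
    rw [div_eq_mul_inv, h, mul_add, ← div_eq_mul_inv, add_comm, ← Nat.cast_mul,
      Nat.ceil_add_natCast (by positivity)]
  have hmono : ⌈(m : ℝ) / δ⌉₊ ≤ ⌈((m : ℝ) + 1) / δ⌉₊ := Nat.ceil_mono (by gcongr; linarith)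
  have hsucc := hshift (m + 1)
  push_cast at hsucc
  rw [beattyMultiplicity_eq_ceil_sub_ceil hγ hm, beattyMultiplicity_eq_ceil_sub_ceil hδ hm,
    hsucc, hshift m, add_mul, one_mul]
  omega

end Beatty

noncomputable def selfDefiningSlope (k : ℕ) : ℝ := ((k : ℝ) - 1 + √((k : ℝ) ^ 2 + 1)) / k

section SelfDefiningSlope

variable {k : ℕ}

theorem sqrt_sq_add_one_bounds (hk : 0 < k) :
    (k : ℝ) < √((k : ℝ) ^ 2 + 1) ∧ √((k : ℝ) ^ 2 + 1) < k + 1 := by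
  have hk0 : (0 : ℝ) < k := by exact_mod_cast hk
  constructor
  · exact Real.lt_sqrt_of_sq_lt (by linarith)
  · rw [Real.sqrt_lt' (by positivity)]
    nlinarith

theorem one_lt_selfDefiningSlope (hk : 0 < k) : 1 < selfDefiningSlope k := by
  have hk0 : (0 : ℝ) < k := by exact_mod_cast hk
  have hk1 : (1 : ℝ) ≤ k := by exact_mod_cast hk
  rw [selfDefiningSlope, one_lt_div hk0]
  linarith [sqrt_sq_add_one_bounds hk]

theorem selfDefiningSlope_lt_two (hk : 0 < k) : selfDefiningSlope k < 2 := by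
  have hk0 : (0 : ℝ) < k := by exact_mod_cast hk
  rw [selfDefiningSlope, div_lt_iff₀ hk0]
  linarith [sqrt_sq_add_one_bounds hk]

theorem selfDefiningSlope_quadratic (hk : 0 < k) :
    k * selfDefiningSlope k ^ 2 = 2 * (k - 1) * selfDefiningSlope k + 2 := by
  have hk0 : (k : ℝ) ≠ 0 := by exact_mod_cast hk.ne'
  have hs : √((k : ℝ) ^ 2 + 1) ^ 2 = k ^ 2 + 1 := Real.sq_sqrt (by positivity)
  rw [selfDefiningSlope]
  field_simp
  linear_combination hs

theorem inv_div_selfDefiningSlope (hk : 0 < k) :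
    ((2 - selfDefiningSlope k) / (selfDefiningSlope k - 1))⁻¹ =
      ((k - 1 : ℕ) : ℝ) + (selfDefiningSlope k)⁻¹ := by
  have h1 := one_lt_selfDefiningSlope hk
  have h2 := selfDefiningSlope_lt_two hk
  rw [Nat.cast_pred hk, inv_div, div_eq_iff (by linarith)]
  field_simp
  linear_combination selfDefiningSlope_quadratic hk

end SelfDefiningSlope

theorem mes_self_defining_multiplicity
    (k : ℕ) (hk : 0 < k) (α c : ℝ)
    (hα : α = ((k : ℝ) - 1 + Real.sqrt ((k : ℝ) ^ 2 + 1)) / (k : ℝ))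
    (hc : c = (2 - α) / (α - 1)) :
    ∀ m : ℤ, 0 < m →
      ((∃ n : ℕ, 0 < n ∧ m = ⌊(n : ℝ) * α⌋) →
        {n : ℕ | 0 < n ∧ ⌊(n : ℝ) * c⌋ = m}.ncard = k) ∧
      (¬ (∃ n : ℕ, 0 < n ∧ m = ⌊(n : ℝ) * α⌋) →
        {n : ℕ | 0 < n ∧ ⌊(n : ℝ) * c⌋ = m}.ncard = k - 1) := by
  change α = selfDefiningSlope k at hα
  intro m hm
  lift m to ℕ using hm.le
  have hm0 : 0 < m := by exact_mod_cast hm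
  have hα1 : 1 < α := hα ▸ one_lt_selfDefiningSlope hk
  have hα0 : 0 < α := one_pos.trans hα1
  have hshift : beattyMultiplicity c m = beattyMultiplicity α m + (k - 1) :=
    beattyMultiplicity_of_inv_eq_natCast_add_inv hα0
      (hc ▸ hα ▸ inv_div_selfDefiningSlope hk) hm0
  have hle := beattyMultiplicity_le_one hα1.le hm0
  have hpos := beattyMultiplicity_pos_iff hα0 hm0
  change (_ → beattyMultiplicity c m = k) ∧ (_ → beattyMultiplicity c m = k - 1)
  refine ⟨fun hmem => ?_, fun hnot => ?_⟩
  · have := hpos.2 hmem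
    omega
  · have := mt hpos.1 hnot
    omega
end
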